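/- Let Ω be a basis of a category J and let C be a dagger category that admits polar decomposition. If a diagram D : J ⥤ C has a limit cone (L, (l_A : L ⟶ D A)) such that l_A† ∘ l_A commutes with l_B† ∘ l_B for all A, B ∈ Ω, then (D, Ω) has a dagger limit. -/
import Mathlib


open CategoryTheory

universe v u v₁ u₁ v₂ u₂

class DaggerCategory (C : Type u) [Category.{v} C] where
  dag : ∀ {A B : C}, (A ⟶ B) → (B ⟶ A)
  dag_id : ∀ (A : C), dag (𝟙 A) = 𝟙 A
  dag_comp : ∀ {A B X : C} (f : A ⟶ B) (g : B ⟶ X), dag (f ≫ g) = dag g ≫ dag f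
  dag_dag : ∀ {A B : C} (f : A ⟶ B), dag (dag f) = f

postfix:max "†" => DaggerCategory.dag

section Defs

variable {C : Type u} [Category.{v} C] [DaggerCategory C]

/-- A morphism `f` is a partial isometry if `f ∘ f† ∘ f = f`. -/
def IsPartialIsometry {A B : C} (f : A ⟶ B) : Prop :=
  f ≫ f† ≫ f = f

/-- A morphism `f : A ⟶ B` is unitary if `f† ∘ f = 𝟙 A` and `f ∘ f† = 𝟙 B`. -/
def IsUnitary {A B : C} (f : A ⟶ B) : Prop :=
  f ≫ f† = 𝟙 A ∧ f† ≫ f = 𝟙 B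

/-- A morphism `f` is dagger monic (an isometry) if `f† ∘ f = 𝟙`. -/
def DaggerMonic {A B : C} (f : A ⟶ B) : Prop :=
  f ≫ f† = 𝟙 A

/-- `(L, l)` is a limit cone over the diagram `D`. -/
def IsLimitCone {J : Type u₁} [Category.{v₁} J] (D : J ⥤ C) (L : C)
    (l : ∀ j : J, L ⟶ D.obj j) : Prop :=
  (∀ {j j' : J} (f : j ⟶ j'), l j ≫ D.map f = l j') ∧
  (∀ (M : C) (m : ∀ j : J, M ⟶ D.obj j),
    (∀ {j j' : J} (f : j ⟶ j'), m j ≫ D.map f = m j') →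
    ∃! g : M ⟶ L, ∀ j : J, g ≫ l j = m j)

/-- A class of objects `Ω` is weakly initial when every object admits a morphism
from some member of `Ω`. -/
def WeaklyInitial {J : Type u₁} [Category.{v₁} J] (Ω : Set J) : Prop :=
  ∀ B : J, ∃ A ∈ Ω, Nonempty (A ⟶ B)

/-- `(L, l)` is a dagger limit of `(D, Ω)`: a limit cone whose legs at `Ω` are
partial isometries with pairwise commuting induced projections. -/
def IsDaggerLimit {J : Type u₁} [Category.{v₁} J] (D : J ⥤ C) (Ω : Set J) (L : C)
    (l : ∀ j : J, L ⟶ D.obj j) : Prop :=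
  IsLimitCone D L l ∧
  (∀ j ∈ Ω, IsPartialIsometry (l j)) ∧
  (∀ j ∈ Ω, ∀ j' ∈ Ω,
    (l j ≫ (l j)†) ≫ (l j' ≫ (l j')†) = (l j' ≫ (l j')†) ≫ (l j ≫ (l j)†))

end Defs

/-- `C` admits polar decomposition: every morphism `f : A ⟶ B` factors as
`f = p ∘ i = j ∘ p` where `p` is a partial isometry and `i`, `j` are self-adjoint
bimorphisms. -/
def AdmitsPolarDecomposition (C : Type u) [Category.{v} C] [DaggerCategory C] : Prop :=
  ∀ {A B : C} (f : A ⟶ B), ∃ (p : A ⟶ B) (i : A ⟶ A) (j : B ⟶ B),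
    IsPartialIsometry p ∧ i† = i ∧ j† = j ∧
    Mono i ∧ Epi i ∧ Mono j ∧ Epi j ∧
    f = i ≫ p ∧ f = p ≫ j

/-- A class `Ω` of objects of `J` is a basis when every object `B` admits a unique `A ∈ Ω`
with `J(A, B)` nonempty. -/
def IsBasis {J : Type u₁} [Category.{v₁} J] (Ω : Set J) : Prop :=
  ∀ B : J, ∃! A : J, A ∈ Ω ∧ Nonempty (A ⟶ B)

section CommAux

open DaggerCategory

/-- The key purely equational lemma: if `a` and `b` have polar decompositions
`a = ia ≫ pa = pa ≫ ja`, `b = ib ≫ pb = pb ≫ jb` and the "projections"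
`a ≫ a†` and `b ≫ b†` commute, then the projections `pa ≫ pa†` and `pb ≫ pb†`
of the polar parts commute as well. -/
private lemma comm_aux {C : Type u} [Category.{v} C] [DaggerCategory C] {L A B : C}
    (a : L ⟶ A) (b : L ⟶ B) (pa : L ⟶ A) (ia : L ⟶ L) (ja : A ⟶ A)
    (pb : L ⟶ B) (ib : L ⟶ L) (jb : B ⟶ B)
    (hpa : IsPartialIsometry pa) (hpb : IsPartialIsometry pb)
    (hia : ia† = ia) (hja : ja† = ja) (hib : ib† = ib) (hjb : jb† = jb)
    (hiae : Epi ia) (hibm : Mono ib)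
    (ha1 : a = ia ≫ pa) (ha2 : a = pa ≫ ja)
    (hb1 : b = ib ≫ pb) (hb2 : b = pb ≫ jb)
    (hc : (a ≫ a†) ≫ (b ≫ b†) = (b ≫ b†) ≫ (a ≫ a†)) :
    (pa ≫ pa†) ≫ (pb ≫ pb†) = (pb ≫ pb†) ≫ (pa ≫ pa†) := by
  haveI := hiae
  haveI := hibm
  have hpa' : pa ≫ pa† ≫ pa = pa := hpa
  have hpb' : pb ≫ pb† ≫ pb = pb := hpb
  -- `ia` commutes with `pa ≫ pa†`
  have c1a : ia ≫ pa ≫ pa† = pa ≫ ja ≫ pa† := by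
    rw [← Category.assoc, ← ha1, ha2, Category.assoc]
  have c2a : pa ≫ pa† ≫ ia = pa ≫ ja ≫ pa† := by
    have h := congrArg (fun x : L ⟶ L => x†) c1a
    simp only [dag_comp, dag_dag, hia, hja, Category.assoc] at h
    exact h
  have commA : pa ≫ pa† ≫ ia = ia ≫ pa ≫ pa† := c2a.trans c1a.symm
  -- `ib` commutes with `pb ≫ pb†`
  have c1b : ib ≫ pb ≫ pb† = pb ≫ jb ≫ pb† := by
    rw [← Category.assoc, ← hb1, hb2, Category.assoc]
  have c2b : pb ≫ pb† ≫ ib = pb ≫ jb ≫ pb† := by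
    have h := congrArg (fun x : L ⟶ L => x†) c1b
    simp only [dag_comp, dag_dag, hib, hjb, Category.assoc] at h
    exact h
  have commB : pb ≫ pb† ≫ ib = ib ≫ pb ≫ pb† := c2b.trans c1b.symm
  -- expansions of a ≫ a† and b ≫ b†
  have ea1 : a ≫ a† = ia ≫ ia ≫ pa ≫ pa† := by
    conv_lhs => rw [ha1]
    simp only [dag_comp, hia, Category.assoc]
    rw [commA]
  have eb1 : b ≫ b† = ib ≫ ib ≫ pb ≫ pb† := by
    conv_lhs => rw [hb1]
    simp only [dag_comp, hib, Category.assoc]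
    rw [commB]
  have eb2 : b ≫ b† = pb ≫ pb† ≫ ib ≫ ib := by
    have h := congrArg (fun x : L ⟶ L => x†) eb1
    simp only [dag_comp, dag_dag, hib, Category.assoc] at h
    exact h
  -- idempotence
  have tidemA : pa ≫ pa† ≫ pa ≫ pa† = pa ≫ pa† := by
    have h : pa ≫ pa† ≫ pa ≫ pa† = (pa ≫ pa† ≫ pa) ≫ pa† := by
      simp only [Category.assoc]
    rw [h, hpa']
  have tidemBr : ∀ {W : C} (g : L ⟶ W), pb ≫ pb† ≫ pb ≫ pb† ≫ g = pb ≫ pb† ≫ g := by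
    intro W g
    calc pb ≫ pb† ≫ pb ≫ pb† ≫ g = (pb ≫ pb† ≫ pb) ≫ pb† ≫ g := by
          simp only [Category.assoc]
      _ = pb ≫ pb† ≫ g := by rw [hpb']
  -- e_A absorbs t_A on the right
  have eata : (a ≫ a†) ≫ pa ≫ pa† = a ≫ a† := by
    rw [ea1]
    simp only [Category.assoc]
    rw [tidemA]
  -- R1
  have R1 : (a ≫ a†) ≫ (b ≫ b†) ≫ pa ≫ pa† = (a ≫ a†) ≫ (b ≫ b†) := by
    calc (a ≫ a†) ≫ (b ≫ b†) ≫ pa ≫ pa†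
        = ((a ≫ a†) ≫ (b ≫ b†)) ≫ pa ≫ pa† := by simp only [Category.assoc]
      _ = ((b ≫ b†) ≫ (a ≫ a†)) ≫ pa ≫ pa† := by rw [hc]
      _ = (b ≫ b†) ≫ ((a ≫ a†) ≫ pa ≫ pa†) := by simp only [Category.assoc]
      _ = (b ≫ b†) ≫ (a ≫ a†) := by rw [eata]
      _ = (a ≫ a†) ≫ (b ≫ b†) := hc.symm
  -- R2 via epi cancellation of ia ≫ ia
  have R1' : ia ≫ (ia ≫ ((pa ≫ pa†) ≫ (b ≫ b†) ≫ pa ≫ pa†))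
      = ia ≫ (ia ≫ ((pa ≫ pa†) ≫ (b ≫ b†))) := by
    calc ia ≫ (ia ≫ ((pa ≫ pa†) ≫ (b ≫ b†) ≫ pa ≫ pa†))
        = (a ≫ a†) ≫ (b ≫ b†) ≫ pa ≫ pa† := by
          rw [ea1]; simp only [Category.assoc]
      _ = (a ≫ a†) ≫ (b ≫ b†) := R1
      _ = ia ≫ (ia ≫ ((pa ≫ pa†) ≫ (b ≫ b†))) := by
          rw [ea1]; simp only [Category.assoc]
  have R2 : (pa ≫ pa†) ≫ (b ≫ b†) ≫ pa ≫ pa† = (pa ≫ pa†) ≫ (b ≫ b†) := by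
    have h1 := (cancel_epi ia).mp R1'
    exact (cancel_epi ia).mp h1
  -- R3 : pa ≫ pa† commutes with b ≫ b†
  have R2d := congrArg (fun x : L ⟶ L => x†) R2
  simp only [dag_comp, dag_dag, Category.assoc] at R2d
  have R2' : pa ≫ pa† ≫ b ≫ b† ≫ pa ≫ pa† = pa ≫ pa† ≫ b ≫ b† := by
    simpa only [Category.assoc] using R2
  have R3 : pa ≫ pa† ≫ b ≫ b† = b ≫ b† ≫ pa ≫ pa† := R2'.symm.trans R2d
  have R3g : (pa ≫ pa†) ≫ (b ≫ b†) = (b ≫ b†) ≫ (pa ≫ pa†) := by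
    simpa only [Category.assoc] using R3
  -- substitute b ≫ b† = pb ≫ pb† ≫ ib ≫ ib
  have S0g : (pa ≫ pa†) ≫ (pb ≫ pb† ≫ ib ≫ ib) = (pb ≫ pb† ≫ ib ≫ ib) ≫ (pa ≫ pa†) := by
    rw [← eb2]; exact R3g
  have S0 : pa ≫ pa† ≫ pb ≫ pb† ≫ ib ≫ ib = pb ≫ pb† ≫ ib ≫ ib ≫ pa ≫ pa† := by
    simpa only [Category.assoc] using S0g
  -- precompose with pb ≫ pb†
  have S1 : pb ≫ pb† ≫ pa ≫ pa† ≫ pb ≫ pb† ≫ ib ≫ ib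
      = pa ≫ pa† ≫ pb ≫ pb† ≫ ib ≫ ib := by
    have h0 := congrArg (fun x : L ⟶ L => (pb ≫ pb†) ≫ x) S0
    simp only [Category.assoc] at h0
    rw [tidemBr] at h0
    rw [← S0] at h0
    exact h0
  -- cancel ib twice
  have S1l := S1
  simp only [← Category.assoc] at S1l
  rw [cancel_mono ib, cancel_mono ib] at S1l
  have T1 : pb ≫ pb† ≫ pa ≫ pa† ≫ pb ≫ pb† = pa ≫ pa† ≫ pb ≫ pb† := by
    simpa only [Category.assoc] using S1l
  have T1d := congrArg (fun x : L ⟶ L => x†) T1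
  simp only [dag_comp, dag_dag, Category.assoc] at T1d
  -- T1d : pb ≫ pb† ≫ pa ≫ pa† ≫ pb ≫ pb† = pb ≫ pb† ≫ pa ≫ pa†
  have final : pa ≫ pa† ≫ pb ≫ pb† = pb ≫ pb† ≫ pa ≫ pa† := T1.symm.trans T1d
  simpa only [Category.assoc] using final

end CommAux

/-- Let `Ω` be a basis of `J` and `C` a dagger category admitting polar
decomposition. If `D : J ⥤ C` has a limit cone `(L, l)` such that `l_A† ∘ l_A` commutes with
`l_B† ∘ l_B` for all `A, B ∈ Ω`, then `(D, Ω)` has a dagger limit. -/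
theorem daggerLimit_of_polar {C : Type u} [Category.{v} C] [DaggerCategory C]
    {J : Type u₁} [Category.{v₁} J] (Ω : Set J) (hΩ : IsBasis Ω)
    (hpolar : AdmitsPolarDecomposition C) (D : J ⥤ C)
    {L : C} (l : ∀ j : J, L ⟶ D.obj j) (hL : IsLimitCone D L l)
    (hcomm : ∀ j ∈ Ω, ∀ j' ∈ Ω,
      (l j ≫ (l j)†) ≫ (l j' ≫ (l j')†) = (l j' ≫ (l j')†) ≫ (l j ≫ (l j)†)) :
    ∃ (L' : C) (l' : ∀ j : J, L' ⟶ D.obj j), IsDaggerLimit D Ω L' l' := by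
  classical
  obtain ⟨hcone, huniv⟩ := hL
  -- basis data
  have hsel : ∀ k : J, ∃ A, A ∈ Ω ∧ Nonempty (A ⟶ k) := fun k => (hΩ k).exists
  choose Af hmem hne using hsel
  have φ : ∀ k : J, Af k ⟶ k := fun k => (hne k).some
  have huniq : ∀ (k X : J), X ∈ Ω → (X ⟶ k) → X = Af k := fun k X hX u =>
    (hΩ k).unique ⟨hX, ⟨u⟩⟩ ⟨hmem k, hne k⟩
  -- polar decomposition data for every leg
  have hpol : ∀ A : J, ∃ (p : L ⟶ D.obj A) (i : L ⟶ L) (jA : D.obj A ⟶ D.obj A),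
      IsPartialIsometry p ∧ i† = i ∧ jA† = jA ∧ Mono i ∧ Epi i ∧ Mono jA ∧ Epi jA ∧
      l A = i ≫ p ∧ l A = p ≫ jA := fun A => hpolar (l A)
  choose p ii jj hp hisa hjsa him hie hjm hje hf1 hf2 using hpol
  -- the polar part is a cone on morphisms out of a fixed source
  have K1 : ∀ {X k : J} (u v : X ⟶ k), p X ≫ D.map u = p X ≫ D.map v := by
    intro X k u v
    have h1 : ii X ≫ p X ≫ D.map u = ii X ≫ p X ≫ D.map v := by
      rw [← Category.assoc, ← hf1 X, hcone u, ← Category.assoc, ← hf1 X, hcone v]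
    exact (hie X).left_cancellation _ _ h1
  have K2 : ∀ (X k : J), X ∈ Ω → ∀ (u : X ⟶ k),
      p X ≫ D.map u = p (Af k) ≫ D.map (φ k) := by
    intro X k hX u
    have e := huniq k X hX u
    subst e
    exact K1 u (φ k)
  have K3 : ∀ (X k : J), X ∈ Ω → (X ⟶ k) → (ii X ≫ l k = ii (Af k) ≫ l k) := by
    intro X k hX u
    have e := huniq k X hX u
    subst e
    rfl
  have lpΩ : ∀ A, A ∈ Ω → p (Af A) ≫ D.map (φ A) = p A := by
    intro A hA
    have h := K2 A A hA (𝟙 A)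
    rw [D.map_id, Category.comp_id] at h
    exact h.symm
  have lp2 : ∀ k : J, p (Af (Af k)) ≫ D.map (φ (Af k)) = p (Af k) :=
    fun k => lpΩ (Af k) (hmem k)
  refine ⟨L, fun k => p (Af k) ≫ D.map (φ k), ⟨?_, ?_⟩, ?_, ?_⟩
  · -- cone condition
    intro j j' u
    show (p (Af j) ≫ D.map (φ j)) ≫ D.map u = p (Af j') ≫ D.map (φ j')
    rw [Category.assoc, ← D.map_comp]
    exact K2 (Af j) j' (hmem j) (φ j ≫ u)
  · -- universal property
    intro M m hm
    obtain ⟨g, hg, -⟩ := huniv M m hm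
    have hncone : ∀ {k k' : J} (u : k ⟶ k'),
        (g ≫ ii (Af k) ≫ l k) ≫ D.map u = g ≫ ii (Af k') ≫ l k' := by
      intro k k' u
      have h1 : (g ≫ ii (Af k) ≫ l k) ≫ D.map u = g ≫ ii (Af k) ≫ l k' := by
        rw [Category.assoc, Category.assoc, hcone u]
      rw [h1, K3 (Af k) k' (hmem k) (φ k ≫ u)]
    obtain ⟨h, hh, -⟩ := huniv M (fun k => g ≫ ii (Af k) ≫ l k) hncone
    have hhp : ∀ A, A ∈ Ω → h ≫ p A = m A := by
      intro A hA
      haveI := hjm A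
      have h1 : h ≫ l A = g ≫ ii A ≫ l A := by
        have h0 := hh A
        rw [← K3 A A hA (𝟙 A)] at h0
        exact h0
      have h2 : (h ≫ p A) ≫ jj A = (g ≫ l A) ≫ jj A := by
        calc (h ≫ p A) ≫ jj A = h ≫ l A := by rw [Category.assoc, ← hf2 A]
          _ = g ≫ ii A ≫ l A := h1
          _ = (g ≫ l A) ≫ jj A := by
              conv_lhs => rw [hf2 A]
              conv_rhs => rw [hf1 A]
              simp only [Category.assoc]
      have h3 := (cancel_mono (jj A)).mp h2
      rw [h3]
      exact hg A
    have hex : ∀ k, h ≫ p (Af k) ≫ D.map (φ k) = m k := by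
      intro k
      rw [← Category.assoc, hhp (Af k) (hmem k), hm (φ k)]
    refine ⟨h, hex, ?_⟩
    intro h' hh'
    have key : ∀ (q : M ⟶ L), (∀ k, q ≫ p (Af k) ≫ D.map (φ k) = m k) → ∀ k : J,
        q ≫ l k = (m (Af k) ≫ jj (Af k)) ≫ D.map (φ k) := by
      intro q hq k
      have h1 : q ≫ p (Af k) = m (Af k) := by
        have h0 := hq (Af k)
        rw [lp2 k] at h0
        exact h0
      calc q ≫ l k = q ≫ l (Af k) ≫ D.map (φ k) := by rw [hcone (φ k)]
        _ = q ≫ (p (Af k) ≫ jj (Af k)) ≫ D.map (φ k) := by rw [← hf2 (Af k)]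
        _ = (q ≫ p (Af k)) ≫ jj (Af k) ≫ D.map (φ k) := by simp only [Category.assoc]
        _ = m (Af k) ≫ jj (Af k) ≫ D.map (φ k) := by rw [h1]
        _ = (m (Af k) ≫ jj (Af k)) ≫ D.map (φ k) := by simp only [Category.assoc]
    have e1 := key h' hh'
    have e2 := key h hex
    have hcq : ∀ {k k' : J} (u : k ⟶ k'), (h ≫ l k) ≫ D.map u = h ≫ l k' := by
      intro k k' u
      rw [Category.assoc, hcone u]
    obtain ⟨g₀, hg₀, hg₀u⟩ := huniv M (fun k => h ≫ l k) hcq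
    have hh0 : h = g₀ := hg₀u h (fun k => rfl)
    have hh'0 : h' = g₀ := hg₀u h' (fun k => (e1 k).trans (e2 k).symm)
    exact hh'0.trans hh0.symm
  · -- partial isometries
    intro A hA
    show IsPartialIsometry (p (Af A) ≫ D.map (φ A))
    rw [lpΩ A hA]
    exact hp A
  · -- commuting projections
    intro A hA B hB
    show ((p (Af A) ≫ D.map (φ A)) ≫ (p (Af A) ≫ D.map (φ A))†) ≫
        ((p (Af B) ≫ D.map (φ B)) ≫ (p (Af B) ≫ D.map (φ B))†)
        = ((p (Af B) ≫ D.map (φ B)) ≫ (p (Af B) ≫ D.map (φ B))†) ≫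
        ((p (Af A) ≫ D.map (φ A)) ≫ (p (Af A) ≫ D.map (φ A))†)
    rw [lpΩ A hA, lpΩ B hB]
    exact comm_aux (l A) (l B) (p A) (ii A) (jj A) (p B) (ii B) (jj B) (hp A) (hp B)
      (hisa A) (hjsa A) (hisa B) (hjsa B) (hie A) (him B) (hf1 A) (hf2 A) (hf1 B) (hf2 B)
      (hcomm A hA B hB)
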